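/- Let n ≥ 1, let γ ∈ (0, n/2 + 1) with γ ≠ n/2, and set s := n/2 + γ and a := 1 − 2γ. Suppose v is a C² function on ℝ₊^{n+1} satisfying y²Δv(z) − (n−1)y∂_y v(z) + s(n−s)v(z) = 0 for every z ∈ ℝ₊^{n+1}. Then the function w(x,y) := 1 − v(x,y)/y^{n−s} satisfies y·Δw(z) + a·∂_y w(z) = 0 for every z ∈ ℝ₊^{n+1}, i.e. div(y^a ∇w) = 0 on ℝ₊^{n+1}. -/

import Mathlib

open MeasureTheory Filter Set Topology
open scoped ENNReal NNReal

noncomputable section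

/-- The Euclidean space `ℝ^{n+1}`. -/
abbrev E (n : ℕ) := EuclideanSpace ℝ (Fin (n + 1))

/-- The last coordinate `y` of a point `z = (x, y) ∈ ℝ^{n+1}`. -/
def ycoord {n : ℕ} (z : E n) : ℝ := z (Fin.last n)

/-- The open upper half-space `ℝ₊^{n+1}`. -/
def upperHalf (n : ℕ) : Set (E n) := {z | 0 < ycoord z}

/-- The open upper half-ball `B_r⁺`. -/
def Bplus (n : ℕ) (r : ℝ) : Set (E n) := {z | 0 < ycoord z ∧ ‖z‖ < r}

/-- The upper hemisphere `(∂B_r)⁺`. -/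
def sphPlus (n : ℕ) (r : ℝ) : Set (E n) := {z | 0 < ycoord z ∧ ‖z‖ = r}

/-- The point `(x, y) ∈ ℝ^{n+1}` built from `x ∈ ℝⁿ` and `y ∈ ℝ`. -/
def pt {n : ℕ} (x : EuclideanSpace ℝ (Fin n)) (y : ℝ) : E n :=
  (EuclideanSpace.equiv (Fin (n + 1)) ℝ).symm (Fin.snoc (fun i => x i) y)

/-- The unit vector `e_{n+1}` in the `y`-direction. -/
def eY (n : ℕ) : E n := EuclideanSpace.single (Fin.last n) (1 : ℝ)

/-- The partial derivative `∂_y u` in the `y`-direction. -/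
def partialY {n : ℕ} (u : E n → ℝ) (z : E n) : ℝ := fderiv ℝ u z (eY n)

/-- The Euclidean Laplacian `Δu = ∑ ∂²u/∂z_i²`. -/
def lap {n : ℕ} (u : E n → ℝ) (z : E n) : ℝ :=
  ∑ i : Fin (n + 1),
    fderiv ℝ (fun w => fderiv ℝ u w (EuclideanSpace.single i (1 : ℝ))) z
      (EuclideanSpace.single i (1 : ℝ))

/-- A C¹ function with compact support contained in `{z : ‖z‖ ≤ r, y > 0}`. -/
def IsTestFn (n : ℕ) (r : ℝ) (φ : E n → ℝ) : Prop :=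
  ContDiff ℝ 1 φ ∧ tsupport φ ⊆ {z : E n | ‖z‖ ≤ r ∧ 0 < ycoord z}

/-- The `y^a`-weighted Sobolev energy `∫_{B_r⁺} (|∇u|² + u²) y^a dz`. -/
def wInt (n : ℕ) (a : ℝ) (u : E n → ℝ) (r : ℝ) : ℝ≥0∞ :=
  ∫⁻ z in Bplus n r, ENNReal.ofReal ((‖gradient u z‖ ^ 2 + (u z) ^ 2) * (ycoord z) ^ a)

/-- Membership in `H^{1,a}(ℝ₊^{n+1})`: locally finite weighted Sobolev norm. -/
def memH1 (n : ℕ) (a : ℝ) (u : E n → ℝ) : Prop := ∀ r > 0, wInt n a u r < ⊤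

/-- Membership in `H̃^{1,a}(ℝ₊^{n+1})`: finite local weighted norm together with
approximability by C¹ functions compactly supported away from the boundary. -/
def memH1T (n : ℕ) (a : ℝ) (u : E n → ℝ) : Prop :=
  memH1 n a u ∧ ∀ r > 0, ∃ φ : ℕ → E n → ℝ, (∀ k, IsTestFn n r (φ k)) ∧
    Tendsto (fun k => wInt n a (fun z => u z - φ k z) r) atTop (nhds 0)

/-! With `p = s - n` we have `w = 1 - v y^p` near every point of the half-space, and the product
rule gives `y Δw + a ∂_y w = -y^(p-1) (y² Δv + (2p + a) y ∂_y v + p (p - 1 + a) v)`.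
Since `a = 1 + n - 2s`, the coefficients are `2p + a = -(n - 1)` and `p (p - 1 + a) = s (n - s)`,
so the bracket is the hyperbolic equation for `v`. -/

section SecondDirDeriv

variable {F : Type*} [NormedAddCommGroup F] [NormedSpace ℝ F]

def secondDirDeriv (f : F → ℝ) (x e : F) : ℝ :=
  fderiv ℝ (fun y => fderiv ℝ f y e) x e

theorem ContDiffAt.differentiableAt_fderiv_apply {f : F → ℝ} {x : F} (hf : ContDiffAt ℝ 2 f x)
    (e : F) : DifferentiableAt ℝ (fun y => fderiv ℝ f y e) x :=
  ((hf.fderiv_right (m := 1) le_rfl).clm_apply contDiffAt_const).differentiableAt one_ne_zero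

theorem secondDirDeriv_const_sub (c : ℝ) (f : F → ℝ) (x e : F) :
    secondDirDeriv (fun y => c - f y) x e = -secondDirDeriv f x e := by
  simp [secondDirDeriv, fderiv_const_sub, fderiv_fun_neg]

theorem secondDirDeriv_mul {f g : F → ℝ} {x : F} (hf : ContDiffAt ℝ 2 f x)
    (hg : ContDiffAt ℝ 2 g x) (e : F) :
    secondDirDeriv (fun y => f y * g y) x e =
      f x * secondDirDeriv g x e + 2 * (fderiv ℝ f x e * fderiv ℝ g x e) +
        g x * secondDirDeriv f x e := by
  have hfg : (fun y => fderiv ℝ (fun y => f y * g y) y e) =ᶠ[𝓝 x]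
      fun y => f y * fderiv ℝ g y e + g y * fderiv ℝ f y e := by
    filter_upwards [hf.eventually (by simp), hg.eventually (by simp)] with y hfy hgy
    rw [fderiv_fun_mul (hfy.differentiableAt two_ne_zero) (hgy.differentiableAt two_ne_zero)]
    simp
  have hf1 := (hf.differentiableAt two_ne_zero).hasFDerivAt
  have hg1 := (hg.differentiableAt two_ne_zero).hasFDerivAt
  have hf2 := (hf.differentiableAt_fderiv_apply e).hasFDerivAt
  have hg2 := (hg.differentiableAt_fderiv_apply e).hasFDerivAt
  rw [secondDirDeriv, hfg.fderiv_eq, ((hf1.fun_mul hg2).fun_add (hg1.fun_mul hf2)).fderiv]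
  simp only [secondDirDeriv, add_apply, smul_apply, smul_eq_mul]
  ring

theorem fderiv_comp_clm_apply {φ : ℝ → ℝ} (ℓ : F →L[ℝ] ℝ) {x : F}
    (hφ : DifferentiableAt ℝ φ (ℓ x)) (e : F) :
    fderiv ℝ (fun y => φ (ℓ y)) x e = deriv φ (ℓ x) * ℓ e := by
  have h : HasFDerivAt (fun y => φ (ℓ y)) (deriv φ (ℓ x) • ℓ) x :=
    hφ.hasDerivAt.comp_hasFDerivAt x ℓ.hasFDerivAt
  simp [h.fderiv]

theorem secondDirDeriv_comp_clm {φ : ℝ → ℝ} (ℓ : F →L[ℝ] ℝ) {x : F}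
    (hφ : ContDiffAt ℝ 2 φ (ℓ x)) (e : F) :
    secondDirDeriv (fun y => φ (ℓ y)) x e = deriv (deriv φ) (ℓ x) * ℓ e ^ 2 := by
  have hfd : (fun y => fderiv ℝ (fun y => φ (ℓ y)) y e) =ᶠ[𝓝 x]
      fun y => deriv φ (ℓ y) * ℓ e := by
    filter_upwards [ℓ.continuous.continuousAt.eventually (hφ.eventually (by simp))] with y hy
    exact fderiv_comp_clm_apply ℓ (hy.differentiableAt two_ne_zero) e
  have hφ' : HasDerivAt (deriv φ) (deriv (deriv φ) (ℓ x)) (ℓ x) :=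
    (hφ.differentiableAt_fderiv_apply 1).hasDerivAt
  have h : HasFDerivAt (fun y => deriv φ (ℓ y) * ℓ e)
      ((ℓ e) • deriv (deriv φ) (ℓ x) • ℓ) x :=
    (hφ'.comp_hasFDerivAt x ℓ.hasFDerivAt).mul_const (ℓ e)
  rw [secondDirDeriv, hfd.fderiv_eq, h.fderiv]
  simp only [smul_apply, smul_eq_mul]
  ring

end SecondDirDeriv

theorem deriv_deriv_rpow_const (p t : ℝ) :
    deriv (deriv fun t => t ^ p) t = p * (p - 1) * t ^ (p - 2) := by
  rw [Real.deriv_rpow_const', deriv_const_mul_field, Real.deriv_rpow_const]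
  ring_nf

section UpperHalfSpace

variable {n : ℕ}

theorem isOpen_upperHalf : IsOpen (upperHalf n) :=
  isOpen_lt continuous_const (EuclideanSpace.proj (𝕜 := ℝ) (Fin.last n)).continuous

theorem ycoord_single (i : Fin (n + 1)) (c : ℝ) :
    ycoord (EuclideanSpace.single i c : E n) = if i = Fin.last n then c else 0 := by
  simp [ycoord, @eq_comm _ (Fin.last n)]

theorem lap_eq_sum_secondDirDeriv (u : E n → ℝ) (z : E n) :
    lap u z = ∑ i, secondDirDeriv u z (EuclideanSpace.single i 1) :=
  rfl

theorem Filter.EventuallyEq.lap_eq {f g : E n → ℝ} {z : E n} (h : f =ᶠ[𝓝 z] g) :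
    lap f z = lap g z := by
  refine Finset.sum_congr rfl fun i _ => ?_
  have hi : (fun x => fderiv ℝ f x (EuclideanSpace.single i 1)) =ᶠ[𝓝 z]
      fun x => fderiv ℝ g x (EuclideanSpace.single i 1) :=
    (h.fderiv (𝕜 := ℝ)).mono fun x hx => congrArg (· (EuclideanSpace.single i 1)) hx
  rw [hi.fderiv_eq]

theorem Filter.EventuallyEq.partialY_eq {f g : E n → ℝ} {z : E n} (h : f =ᶠ[𝓝 z] g) :
    partialY f z = partialY g z := by
  rw [partialY, h.fderiv_eq, partialY]

theorem lap_const_sub (c : ℝ) (f : E n → ℝ) (z : E n) :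
    lap (fun x => c - f x) z = -lap f z := by
  simp [lap_eq_sum_secondDirDeriv, secondDirDeriv_const_sub]

theorem partialY_const_sub (c : ℝ) (f : E n → ℝ) (z : E n) :
    partialY (fun x => c - f x) z = -partialY f z := by
  simp [partialY, fderiv_const_sub]

theorem lap_mul {f g : E n → ℝ} {z : E n} (hf : ContDiffAt ℝ 2 f z)
    (hg : ContDiffAt ℝ 2 g z) :
    lap (fun x => f x * g x) z =
      f z * lap g z +
        2 * ∑ i, fderiv ℝ f z (EuclideanSpace.single i 1) *
          fderiv ℝ g z (EuclideanSpace.single i 1) +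
        g z * lap f z := by
  simp only [lap_eq_sum_secondDirDeriv, secondDirDeriv_mul hf hg, Finset.sum_add_distrib,
    Finset.mul_sum]

theorem partialY_mul {f g : E n → ℝ} {z : E n} (hf : DifferentiableAt ℝ f z)
    (hg : DifferentiableAt ℝ g z) :
    partialY (fun x => f x * g x) z = f z * partialY g z + g z * partialY f z := by
  simp [partialY, fderiv_fun_mul hf hg]

theorem fderiv_comp_ycoord_apply {φ : ℝ → ℝ} {z : E n}
    (hφ : DifferentiableAt ℝ φ (ycoord z)) (e : E n) :
    fderiv ℝ (fun x => φ (ycoord x)) z e = deriv φ (ycoord z) * ycoord e :=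
  fderiv_comp_clm_apply (EuclideanSpace.proj (Fin.last n)) hφ e

theorem lap_comp_ycoord {φ : ℝ → ℝ} {z : E n} (hφ : ContDiffAt ℝ 2 φ (ycoord z)) :
    lap (fun x => φ (ycoord x)) z = deriv (deriv φ) (ycoord z) := by
  have h : ∀ e, secondDirDeriv (fun x => φ (ycoord x)) z e =
      deriv (deriv φ) (ycoord z) * ycoord e ^ 2 :=
    secondDirDeriv_comp_clm (EuclideanSpace.proj (Fin.last n)) hφ
  simp only [lap_eq_sum_secondDirDeriv, h, ycoord_single]
  simp

theorem sum_fderiv_mul_fderiv_comp_ycoord (f : E n → ℝ) {φ : ℝ → ℝ} {z : E n}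
    (hφ : DifferentiableAt ℝ φ (ycoord z)) :
    ∑ i, fderiv ℝ f z (EuclideanSpace.single i 1) *
        fderiv ℝ (fun x => φ (ycoord x)) z (EuclideanSpace.single i 1) =
      deriv φ (ycoord z) * partialY f z := by
  simp only [fderiv_comp_ycoord_apply hφ, ycoord_single]
  simp [partialY, eY, mul_comm]

theorem partialY_comp_ycoord {φ : ℝ → ℝ} {z : E n}
    (hφ : DifferentiableAt ℝ φ (ycoord z)) :
    partialY (fun x => φ (ycoord x)) z = deriv φ (ycoord z) := by
  simp only [partialY, eY, fderiv_comp_ycoord_apply hφ, ycoord_single]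
  simp

theorem lap_mul_rpow_ycoord {f : E n → ℝ} {z : E n} (hf : ContDiffAt ℝ 2 f z)
    (hz : 0 < ycoord z) (p : ℝ) :
    lap (fun x => f x * ycoord x ^ p) z =
      f z * (p * (p - 1) * ycoord z ^ (p - 2)) + 2 * (p * ycoord z ^ (p - 1) * partialY f z) +
        ycoord z ^ p * lap f z := by
  have hφ : ContDiffAt ℝ 2 (fun t : ℝ => t ^ p) (ycoord z) :=
    Real.contDiffAt_rpow_const_of_ne hz.ne'
  have hg : ContDiffAt ℝ 2 (fun x : E n => ycoord x ^ p) z :=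
    hφ.comp z (EuclideanSpace.proj (𝕜 := ℝ) (Fin.last n)).contDiff.contDiffAt
  rw [lap_mul hf hg, sum_fderiv_mul_fderiv_comp_ycoord f (hφ.differentiableAt two_ne_zero),
    lap_comp_ycoord hφ, deriv_deriv_rpow_const, Real.deriv_rpow_const]

theorem partialY_mul_rpow_ycoord {f : E n → ℝ} {z : E n} (hf : DifferentiableAt ℝ f z)
    (hz : 0 < ycoord z) (p : ℝ) :
    partialY (fun x => f x * ycoord x ^ p) z =
      f z * (p * ycoord z ^ (p - 1)) + ycoord z ^ p * partialY f z := by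
  have hφ : DifferentiableAt ℝ (fun t : ℝ => t ^ p) (ycoord z) :=
    Real.differentiableAt_rpow_const_of_ne p hz.ne'
  have hg : DifferentiableAt ℝ (fun x : E n => ycoord x ^ p) z :=
    hφ.comp z (EuclideanSpace.proj (𝕜 := ℝ) (Fin.last n)).differentiableAt
  rw [partialY_mul hf hg, partialY_comp_ycoord hφ, Real.deriv_rpow_const]

end UpperHalfSpace

theorem transformed_equation_is_degenerate_elliptic_general
    (n : ℕ) (γ : ℝ)
    (s a : ℝ) (hs : s = (n : ℝ) / 2 + γ) (ha : a = 1 - 2 * γ)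
    (v : E n → ℝ) (hC2 : ContDiffOn ℝ 2 v (upperHalf n))
    (hpde : ∀ z ∈ upperHalf n,
      (ycoord z) ^ 2 * lap v z - ((n : ℝ) - 1) * ycoord z * partialY v z +
        s * ((n : ℝ) - s) * v z = 0)
    (w : E n → ℝ) (hw : ∀ z ∈ upperHalf n, w z = 1 - v z / (ycoord z) ^ ((n : ℝ) - s)) :
    ∀ z ∈ upperHalf n, ycoord z * lap w z + a * partialY w z = 0 := by
  intro z hz
  have hy : 0 < ycoord z := hz
  have hv : ContDiffAt ℝ 2 v z := hC2.contDiffAt (isOpen_upperHalf.mem_nhds hz)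
  have hw_near : w =ᶠ[𝓝 z] fun x => 1 - v x * ycoord x ^ (s - n) := by
    filter_upwards [isOpen_upperHalf.mem_nhds hz] with x hx
    rw [hw x hx, div_eq_mul_inv, ← Real.rpow_neg (le_of_lt hx), neg_sub]
  rw [hw_near.lap_eq, hw_near.partialY_eq, lap_const_sub, partialY_const_sub,
    lap_mul_rpow_ycoord hv hy, partialY_mul_rpow_ycoord (hv.differentiableAt two_ne_zero) hy]
  have hpow₁ : ycoord z ^ (s - n - 1) = ycoord z ^ (s - n - 2) * ycoord z := by
    rw [← Real.rpow_add_one hy.ne']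
    ring_nf
  have hpow₂ : ycoord z ^ (s - n) = ycoord z ^ (s - n - 2) * ycoord z ^ 2 := by
    rw [← Real.rpow_natCast, ← Real.rpow_add hy]
    norm_num
  obtain rfl : a = 1 + n - 2 * s := by rw [ha, hs]; ring
  rw [hpow₁, hpow₂]
  linear_combination (-(ycoord z ^ (s - n - 2) * ycoord z)) * hpde z hz

/-- if `-Δ₊v - s(n-s)v = 0` on the hyperbolic upper half-space, then
`w = 1 - v/y^{n-s}` satisfies the degenerate equation `yΔw + a ∂_y w = 0`, `a = 1-2γ`. -/
theorem transformed_equation_is_degenerate_elliptic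
    (n : ℕ) (hn : 1 ≤ n) (γ : ℝ) (hγ : γ ∈ Set.Ioo (0 : ℝ) ((n : ℝ) / 2 + 1))
    (hγn : γ ≠ (n : ℝ) / 2)
    (s a : ℝ) (hs : s = (n : ℝ) / 2 + γ) (ha : a = 1 - 2 * γ)
    (v : E n → ℝ) (hC2 : ContDiffOn ℝ 2 v (upperHalf n))
    (hpde : ∀ z ∈ upperHalf n,
      (ycoord z) ^ 2 * lap v z - ((n : ℝ) - 1) * ycoord z * partialY v z +
        s * ((n : ℝ) - s) * v z = 0)
    (w : E n → ℝ) (hw : ∀ z ∈ upperHalf n, w z = 1 - v z / (ycoord z) ^ ((n : ℝ) - s)) :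
    ∀ z ∈ upperHalf n, ycoord z * lap w z + a * partialY w z = 0 :=
  transformed_equation_is_degenerate_elliptic_general n γ s a hs ha v hC2 hpde w hw

end
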